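/- arXiv:2410.17926 — 6 statements merged into one kernel-verified Lean document; each statement's English description precedes it below -/
import Mathlib

section
/- Set b_N = [λ₊ϱ₊(1−λ₋) + λ₋ϱ₋(1 + λ₊(N−1))] / [λ₊(1−λ₋) + λ₋(1 + λ₊(N−1))] and a_N = λ₊(ϱ₊ − b_N)/(1 + λ₊(N−1)). Define ϱ_ss : {0,…,N} → ℝ by ϱ_ss(0) = ϱ₋, ϱ_ss(N) = ϱ₊ and ϱ_ss(x) = a_N·x + b_N for 1 ≤ x ≤ N−1. Then Δ¹ᴰ_N ϱ_ss(x) = 0 for every x ∈ {1,…,N−1}; that is, ϱ_ss is the stationary discrete density profile with reservoir densities ϱ₋ and ϱ₊. -/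
noncomputable section

/-- The discrete one-dimensional Laplacian `Δ¹ᴰ_N` with boundary rates: the coefficient on
the edge `{x−1,x}` is `cλ₋` for `x = 1` and `c` otherwise, and the coefficient on the edge
`{x,x+1}` is `cλ₊` for `x = N−1` and `c` otherwise. -/
def lap1D (N : ℤ) (c lm lp : ℝ) (f : ℤ → ℝ) (x : ℤ) : ℝ :=
  (N : ℝ) ^ 2 * ((if x = 1 then c * lm else c) * (f (x - 1) - f x)
    + (if x = N - 1 then c * lp else c) * (f (x + 1) - f x))

/-- With `b_N` and `a_N` as displayed, the profile
`ϱ_ss(0) = ϱ₋`, `ϱ_ss(N) = ϱ₊`, `ϱ_ss(x) = a_N x + b_N` for `1 ≤ x ≤ N−1` is harmonic for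
`Δ¹ᴰ_N` on `{1,…,N−1}`: it is the stationary discrete density profile with reservoir
densities `ϱ₋ = rm` and `ϱ₊ = rp`. -/
theorem stationary_profile (N : ℤ) (hN : 3 ≤ N) (c : ℝ) (hc : 0 < c)
    (lm lp : ℝ) (hlm0 : 0 < lm) (hlm1 : lm ≤ 1) (hlp0 : 0 < lp) (hlp1 : lp ≤ 1)
    (rm rp : ℝ) (b a : ℝ)
    (hb : b = (lp * rp * (1 - lm) + lm * rm * (1 + lp * ((N : ℝ) - 1)))
        / (lp * (1 - lm) + lm * (1 + lp * ((N : ℝ) - 1))))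
    (ha : a = lp * (rp - b) / (1 + lp * ((N : ℝ) - 1)))
    (ρ : ℤ → ℝ)
    (hρ : ∀ x : ℤ, ρ x = if x = 0 then rm else if x = N then rp else a * (x : ℝ) + b) :
    ∀ x : ℤ, 1 ≤ x → x ≤ N - 1 → lap1D N c lm lp ρ x = 0 := by
  intro x hx1 hx2
  have hN3 : (3:ℝ) ≤ (N:ℝ) := by exact_mod_cast hN
  have hE0 : (0:ℝ) < 1 + lp * ((N : ℝ) - 1) := by nlinarith
  have hE : (1:ℝ) + lp * ((N : ℝ) - 1) ≠ 0 := ne_of_gt hE0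
  have hD0 : (0:ℝ) < lp * (1 - lm) + lm * (1 + lp * ((N : ℝ) - 1)) := by nlinarith
  have hD : lp * (1 - lm) + lm * (1 + lp * ((N : ℝ) - 1)) ≠ 0 := ne_of_gt hD0
  have haE : a * (1 + lp * ((N : ℝ) - 1)) = lp * (rp - b) := by
    rw [ha]; field_simp
  have hbD : b * (lp * (1 - lm) + lm * (1 + lp * ((N : ℝ) - 1)))
      = lp * rp * (1 - lm) + lm * rm * (1 + lp * ((N : ℝ) - 1)) := by
    rw [hb]; field_simp
  unfold lap1D
  rcases eq_or_ne x 1 with h1 | h1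
  · subst h1
    have hN1 : N - 1 ≠ 1 := by omega
    have h0 : ρ 0 = rm := by rw [hρ]; simp
    have hone : ρ 1 = a * 1 + b := by rw [hρ]; simp; omega
    have htwo : ρ 2 = a * 2 + b := by
      rw [hρ]; rw [if_neg (by norm_num), if_neg (by omega)]; norm_num
    simp only [if_pos rfl, if_neg (Ne.symm hN1), if_true, show (1:ℤ)-1=0 by norm_num,
      show (1:ℤ)+1=2 by norm_num, h0, hone, htwo]
    have keyE : (lm * (rm - (a * 1 + b)) + a) * (1 + lp * ((N : ℝ) - 1)) = 0 := by
      linear_combination (1 - lm) * haE - hbD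
    have key : lm * (rm - (a * 1 + b)) + a = 0 :=
      (mul_eq_zero.mp keyE).resolve_right hE
    linear_combination ((N:ℝ)^2 * c) * key
  rcases eq_or_ne x (N - 1) with h2 | h2
  · subst h2
    have hm : ρ (N - 1 - 1) = a * ((N:ℝ) - 2) + b := by
      rw [hρ, if_neg (by omega), if_neg (by omega)]
      push_cast; ring_nf
    have hmid : ρ (N - 1) = a * ((N:ℝ) - 1) + b := by
      rw [hρ, if_neg (by omega), if_neg (by omega)]
      push_cast; ring_nf
    have hp : ρ (N - 1 + 1) = rp := by
      rw [hρ, if_neg (by omega), if_pos (by omega)]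
    simp only [if_neg h1, if_pos rfl, if_true, hm, hmid, hp]
    linear_combination (-(N:ℝ)^2 * c) * haE
  · -- interior
    have hm : ρ (x - 1) = a * ((x:ℝ) - 1) + b := by
      rw [hρ, if_neg (by omega), if_neg (by omega)]
      push_cast; ring_nf
    have hmid : ρ x = a * (x:ℝ) + b := by
      rw [hρ, if_neg (by omega), if_neg (by omega)]
    have hp : ρ (x + 1) = a * ((x:ℝ) + 1) + b := by
      rw [hρ, if_neg (by omega), if_neg (by omega)]
      push_cast; ring_nf
    simp only [if_neg h1, if_neg h2, hm, hmid, hp]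
    ring


end
end

section
/- Assume λ₋ = λ₊ = 1 and c·N + d ≠ 0. Define 𝒯_N on T_N ∪ ∂T_N by 𝒯_N(x,y) = (N−y)·x / (N²·(cN + d)) − 1_{x=y} / (2N·(cN + d)) for (x,y) ∈ T_N, and 𝒯_N ≡ 0 on ∂T_N. Then Δ²ᴰ_N 𝒯_N(x,y) = −1_{y = x+1} for every (x,y) ∈ T_N; that is, 𝒯_N is the expected occupation time of the upper diagonal 𝒟_N⁺ = {(x,x+1)} by the random walk with generator Δ²ᴰ_N. -/
noncomputable section

/-- Left jump rate of the two-dimensional walk: `c_{z,z−1} = cλ₋` if `z = 1`, else `c`. -/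
def cMinus (c lm : ℝ) (z : ℤ) : ℝ := if z = 1 then c * lm else c

/-- Right jump rate of the two-dimensional walk: `c_{z,z+1} = cλ₊` if `z = N−1`, else `c`. -/
def cPlus (N : ℤ) (c lp : ℝ) (z : ℤ) : ℝ := if z = N - 1 then c * lp else c

/-- The generator `Δ²ᴰ_N` of the two-dimensional random walk on the triangle
`T_N = {(x,y) : 1 ≤ x ≤ y ≤ N−1}` (absorbed at `∂T_N`), acting on functions
`f : ℤ × ℤ → ℝ`: for `x < y` it is the nearest-neighbour operator with rates
`cMinus`/`cPlus` plus the extra diagonal term `d N² (f(x,x) + f(x+1,x+1) − 2f(x,x+1))`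
on the upper diagonal `y = x+1`; for `x = y` it is
`2N² (c_{x,x−1} f(x−1,x) + c_{x,x+1} f(x,x+1) − (c_{x,x−1}+c_{x,x+1}) f(x,x))`. -/
def lap2D (N : ℤ) (c d lm lp : ℝ) (f : ℤ → ℤ → ℝ) (x y : ℤ) : ℝ :=
  if x = y then
    2 * (N : ℝ) ^ 2 * (cMinus c lm x * f (x - 1) x + cPlus N c lp x * f x (x + 1)
      - (cMinus c lm x + cPlus N c lp x) * f x x)
  else
    (N : ℝ) ^ 2 * (cMinus c lm x * (f (x - 1) y - f x y)
        + cPlus N c lp x * (f (x + 1) y - f x y)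
        + cMinus c lm y * (f x (y - 1) - f x y)
        + cPlus N c lp y * (f x (y + 1) - f x y))
      + d * (N : ℝ) ^ 2 * (f x x + f (x + 1) (x + 1) - 2 * f x (x + 1))
        * (if y = x + 1 then 1 else 0)

/-! The closed form is harmonic for the rate-`c` walk away from the diagonal, since `(N - y) x`
has vanishing second differences in each variable. On the diagonal the correction
`-1/(2N(cN+d))` exactly balances the jumps to `(x-1,x)` and `(x,x+1)`. On the upper diagonal
it contributes `-cN/(cN+d)` through the walk, and together with the curvature of `(N - y) x`
along the diagonal it contributes `-d/(cN+d)` through the extra term; these add up to `-1`.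
Since `Δ²ᴰ_N` only reads `f` on the part of the five-point stencil with `x ≤ y`, where `T`
agrees with the closed form, the same holds for `T`. -/

@[simp]
lemma cMinus_one (c : ℝ) (z : ℤ) : cMinus c 1 z = c := by
  simp [cMinus]

@[simp]
lemma cPlus_one (N : ℤ) (c : ℝ) (z : ℤ) : cPlus N c 1 z = c := by
  simp [cPlus]

lemma lap2D_congr {N : ℤ} {c d lm lp : ℝ} {f g : ℤ → ℤ → ℝ} {x y : ℤ} (hxy : x ≤ y)
    (hfg : ∀ i j, i ≤ j → (i - x).natAbs + (j - y).natAbs ≤ 1 → f i j = g i j) :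
    lap2D N c d lm lp f x y = lap2D N c d lm lp g x y := by
  unfold lap2D
  split_ifs with hdiag hup
  · subst hdiag
    rw [hfg (x - 1) x (by omega) (by omega), hfg x (x + 1) (by omega) (by omega),
      hfg x x le_rfl (by omega)]
  · subst hup
    rw [add_sub_cancel_right, hfg (x - 1) (x + 1) (by omega) (by omega),
      hfg (x + 1) (x + 1) le_rfl (by omega), hfg x x le_rfl (by omega),
      hfg x (x + 1 + 1) (by omega) (by omega),
      hfg x (x + 1) (by omega) (by omega)]
  · rw [hfg (x - 1) y (by omega) (by omega), hfg (x + 1) y (by omega) (by omega),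
      hfg x (y - 1) (by omega) (by omega), hfg x (y + 1) (by omega) (by omega),
      hfg x y hxy (by omega), mul_zero, mul_zero]

/-- The expected occupation time `𝒯_N`, extended by its formula to all of `ℤ × ℤ`. -/
def occupationTime (N : ℤ) (c d : ℝ) (x y : ℤ) : ℝ :=
  ((N : ℝ) - y) * x / ((N : ℝ) ^ 2 * (c * N + d))
    - (if x = y then 1 / (2 * N * (c * N + d)) else 0)

lemma occupationTime_zero_left {N : ℤ} {c d : ℝ} {y : ℤ} (hy : y ≠ 0) :
    occupationTime N c d 0 y = 0 := by
  simp [occupationTime, Ne.symm hy]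

lemma occupationTime_N_right {N : ℤ} {c d : ℝ} {x : ℤ} (hx : x ≠ N) :
    occupationTime N c d x N = 0 := by
  simp [occupationTime, hx]

lemma lap2D_occupationTime {N : ℤ} {c d : ℝ} (hN : (N : ℝ) ≠ 0) (hcd : c * (N : ℝ) + d ≠ 0)
    {x y : ℤ} (hxy : x ≤ y) :
    lap2D N c d 1 1 (occupationTime N c d) x y = -(if y = x + 1 then 1 else 0) := by
  have hNcd : (N : ℝ) * c + d ≠ 0 := by rwa [mul_comm]
  simp only [lap2D, occupationTime, cMinus_one, cPlus_one]
  by_cases hdiag : x = y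
  · subst hdiag
    simp only [if_true, if_neg (by omega : x ≠ x + 1), if_neg (by omega : x - 1 ≠ x)]
    push_cast
    field_simp
    ring
  by_cases hup : y = x + 1
  · subst hup
    simp only [if_true, if_neg hdiag, if_neg (by omega : x - 1 ≠ x + 1),
      if_neg (by omega : x ≠ x + 1 + 1), add_sub_cancel_right]
    push_cast
    field_simp
    ring
  · simp only [if_neg hdiag, if_neg hup, if_neg (by omega : x - 1 ≠ y),
      if_neg (by omega : x + 1 ≠ y), if_neg (by omega : x ≠ y - 1),
      if_neg (by omega : x ≠ y + 1)]
    push_cast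
    field_simp
    ring

theorem occupation_time_equation_general (N : ℤ) (c d : ℝ)
    (hcd : c * (N : ℝ) + d ≠ 0) (T : ℤ → ℤ → ℝ)
    (hT : ∀ x y : ℤ, 1 ≤ x → x ≤ y → y ≤ N - 1 →
      T x y = ((N : ℝ) - y) * x / ((N : ℝ) ^ 2 * (c * N + d))
        - (if x = y then 1 / (2 * N * (c * N + d)) else 0))
    (hT0 : ∀ y : ℤ, 0 ≤ y → y ≤ N → T 0 y = 0)
    (hTN : ∀ x : ℤ, 0 ≤ x → x ≤ N → T x N = 0) :
    ∀ x y : ℤ, 1 ≤ x → x ≤ y → y ≤ N - 1 →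
      lap2D N c d 1 1 T x y = -(if y = x + 1 then 1 else 0) := by
  intro x y hx hxy hy
  have hN : (N : ℝ) ≠ 0 := Int.cast_ne_zero.mpr (by omega)
  have hT_stencil : ∀ i j, i ≤ j → (i - x).natAbs + (j - y).natAbs ≤ 1 →
      T i j = occupationTime N c d i j := by
    intro i j hij hdist
    by_cases hi : i = 0
    · subst hi
      rw [hT0 j (by omega) (by omega), occupationTime_zero_left (by omega)]
    by_cases hj : j = N
    · subst hj
      rw [hTN i (by omega) (by omega), occupationTime_N_right (by omega)]
    exact hT i j (by omega) hij (by omega)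
  rw [lap2D_congr hxy hT_stencil]
  exact lap2D_occupationTime hN hcd hxy

/-- For `λ₋ = λ₊ = 1` and `cN + d ≠ 0`, the function
`𝒯_N(x,y) = (N−y)x/(N²(cN+d)) − 1_{x=y}/(2N(cN+d))` on `T_N`, vanishing on `∂T_N`,
satisfies `Δ²ᴰ_N 𝒯_N(x,y) = −1_{y=x+1}` on `T_N`: it is the expected occupation time of
the upper diagonal `𝒟_N⁺` by the random walk with generator `Δ²ᴰ_N`. -/
theorem occupation_time_equation (N : ℤ) (hN : 5 ≤ N) (c d : ℝ) (hc : 0 < c)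
    (hcd : c * (N : ℝ) + d ≠ 0) (T : ℤ → ℤ → ℝ)
    (hT : ∀ x y : ℤ, 1 ≤ x → x ≤ y → y ≤ N - 1 →
      T x y = ((N : ℝ) - y) * x / ((N : ℝ) ^ 2 * (c * N + d))
        - (if x = y then 1 / (2 * N * (c * N + d)) else 0))
    (hT0 : ∀ y : ℤ, 0 ≤ y → y ≤ N → T 0 y = 0)
    (hTN : ∀ x : ℤ, 0 ≤ x → x ≤ N → T x N = 0) :
    ∀ x y : ℤ, 1 ≤ x → x ≤ y → y ≤ N - 1 →
      lap2D N c d 1 1 T x y = -(if y = x + 1 then 1 else 0) :=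
  occupation_time_equation_general N c d hcd T hT hT0 hTN

end
end

section
/- Assume c > 0, c + d ≥ 0 and λ₋, λ₊ ∈ (0,1]. Let u be a function on T_N ∪ ∂T_N vanishing on ∂T_N and satisfying Δ²ᴰ_N u(x,y) = −1_{y = x+1} for every (x,y) ∈ T_N. Then u(x,y) ≥ 0 for every (x,y) ∈ T_N. -/
noncomputable section

/-- (Maximum principle / positivity of the occupation time.)
Assume `c > 0`, `c + d ≥ 0` and `λ₋, λ₊ ∈ (0,1]`. If `u` vanishes on `∂T_N` and solves
`Δ²ᴰ_N u(x,y) = −1_{y=x+1}` on `T_N`, then `u ≥ 0` on `T_N`. -/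
theorem occupation_time_nonneg (N : ℤ) (hN : 5 ≤ N) (c d : ℝ) (hc : 0 < c)
    (hcd : 0 ≤ c + d) (lm lp : ℝ) (hlm0 : 0 < lm) (hlm1 : lm ≤ 1)
    (hlp0 : 0 < lp) (hlp1 : lp ≤ 1) (u : ℤ → ℤ → ℝ)
    (hu0 : ∀ y : ℤ, 0 ≤ y → y ≤ N → u 0 y = 0)
    (huN : ∀ x : ℤ, 0 ≤ x → x ≤ N → u x N = 0)
    (hu : ∀ x y : ℤ, 1 ≤ x → x ≤ y → y ≤ N - 1 →
      lap2D N c d lm lp u x y = -(if y = x + 1 then 1 else 0)) :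
    ∀ x y : ℤ, 1 ≤ x → x ≤ y → y ≤ N - 1 → 0 ≤ u x y := by
  intro x0 y0 hx0 hxy0 hy0
  by_contra hneg
  push_neg at hneg
  classical
  have hN5 : (5:ℝ) ≤ (N:ℝ) := by exact_mod_cast hN
  have hN2 : (0:ℝ) < (N:ℝ)^2 := by nlinarith
  have cm_pos : ∀ z : ℤ, 0 < cMinus c lm z := by
    intro z; unfold cMinus; split <;> positivity
  have cp_pos : ∀ z : ℤ, 0 < cPlus N c lp z := by
    intro z; unfold cPlus; split <;> positivity
  obtain ⟨⟨a, b⟩, hp, hpmin⟩ := Finset.exists_min_image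
    (((Finset.Icc 1 (N-1)) ×ˢ (Finset.Icc 1 (N-1))).filter fun q => q.1 ≤ q.2)
    (fun q => u q.1 q.2)
    ⟨(x0, y0), by simp only [Finset.mem_filter, Finset.mem_product, Finset.mem_Icc]; omega⟩
  simp only [Finset.mem_filter, Finset.mem_product, Finset.mem_Icc] at hp
  set m := u a b with hm_def
  have hmin : ∀ x y : ℤ, 1 ≤ x → x ≤ y → y ≤ N - 1 → m ≤ u x y := by
    intro x y hx hxy hy
    exact hpmin (x, y)
      (by simp only [Finset.mem_filter, Finset.mem_product, Finset.mem_Icc]; omega)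
  have hm : m < 0 := lt_of_le_of_lt (hmin x0 y0 hx0 hxy0 hy0) hneg
  have hmin' : ∀ x y : ℤ, 0 ≤ x → x ≤ y → y ≤ N → m ≤ u x y := by
    intro x y hx hxy hy
    by_cases hx0' : x = 0
    · rw [hx0', hu0 y (by omega) hy]; exact hm.le
    by_cases hyN : y = N
    · rw [hyN, huN x (by omega) (by omega)]; exact hm.le
    exact hmin x y (by omega) hxy (by omega)
  -- Step A : the minimum cannot be attained on the upper diagonal y = x+1
  have stepA : ∀ x : ℤ, 1 ≤ x → x + 1 ≤ N - 1 → u x (x+1) = m → False := by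
    intro x hx hxN hum
    have heq := hu x (x+1) hx (by omega) hxN
    unfold lap2D at heq
    rw [if_neg (show ¬ x = x + 1 by omega), if_pos rfl] at heq
    rw [show cPlus N c lp x = c from if_neg (by omega),
        show cMinus c lm (x+1) = c from if_neg (by omega),
        show x + 1 - 1 = x from by ring] at heq
    rw [hum] at heq
    have hA := hmin' (x-1) (x+1) (by omega) (by omega) (by omega)
    have hB := hmin' (x+1) (x+1) (by omega) le_rfl (by omega)
    have hC := hmin' x x (by omega) le_rfl (by omega)
    have hD := hmin' x (x+1+1) (by omega) (by omega) (by omega)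
    have h1 : 0 ≤ cMinus c lm x * (u (x-1) (x+1) - m) :=
      mul_nonneg (cm_pos x).le (by linarith)
    have h2 : 0 ≤ cPlus N c lp (x+1) * (u x (x+1+1) - m) :=
      mul_nonneg (cp_pos (x+1)).le (by linarith)
    have h3 : 0 ≤ (c+d) * (u (x+1) (x+1) - m) := mul_nonneg hcd (by linarith)
    have h4 : 0 ≤ (c+d) * (u x x - m) := mul_nonneg hcd (by linarith)
    have hint : (0:ℝ) ≤ (N:ℝ)^2 * (cMinus c lm x * (u (x-1) (x+1) - m)
        + cPlus N c lp (x+1) * (u x (x+1+1) - m)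
        + (c+d) * (u (x+1) (x+1) - m) + (c+d) * (u x x - m)) :=
      mul_nonneg hN2.le (by linarith)
    linarith [heq, hint]
  -- Step B : the minimum cannot be attained on the diagonal x = y
  have stepB : ∀ x : ℤ, 1 ≤ x → x ≤ N - 1 → u x x = m → False := by
    intro x hx hxN hum
    have heq := hu x x hx le_rfl hxN
    unfold lap2D at heq
    rw [if_pos rfl, if_neg (show ¬ x = x + 1 by omega)] at heq
    rw [hum] at heq
    have hA := hmin' (x-1) x (by omega) (by omega) (by omega)
    have hB := hmin' x (x+1) (by omega) (by omega) (by omega)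
    have h1 : 0 ≤ cMinus c lm x * (u (x-1) x - m) :=
      mul_nonneg (cm_pos x).le (by linarith)
    have hB' : u x (x+1) = m := by
      by_contra hne
      have hgt : m < u x (x+1) := lt_of_le_of_ne hB (Ne.symm hne)
      have h2 : 0 < cPlus N c lp x * (u x (x+1) - m) := mul_pos (cp_pos x) (by linarith)
      have hint : (0:ℝ) < (N:ℝ)^2 * (cMinus c lm x * (u (x-1) x - m)
          + cPlus N c lp x * (u x (x+1) - m)) :=
        mul_pos hN2 (by linarith)
      linarith [heq, hint]
    by_cases hxe : x = N - 1
    · have : u x (x+1) = 0 := by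
        rw [show x + 1 = N from by omega]; exact huN x (by omega) (by omega)
      rw [hB'] at this; linarith
    · exact stepA x hx (by omega) hB'
  -- Propagation step : off-diagonal minimum propagates upwards in y
  have push : ∀ x y : ℤ, 1 ≤ x → x + 1 < y → y ≤ N - 1 → u x y = m →
      y < N - 1 ∧ u x (y+1) = m := by
    intro x y hx hxy hy hum
    have heq := hu x y hx (by omega) hy
    unfold lap2D at heq
    rw [if_neg (show ¬ x = y by omega), if_neg (show ¬ y = x + 1 by omega)] at heq
    rw [hum] at heq
    have hA := hmin' (x-1) y (by omega) (by omega) (by omega)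
    have hB := hmin' (x+1) y (by omega) (by omega) (by omega)
    have hC := hmin' x (y-1) (by omega) (by omega) (by omega)
    have hD := hmin' x (y+1) (by omega) (by omega) (by omega)
    have h1 : 0 ≤ cMinus c lm x * (u (x-1) y - m) :=
      mul_nonneg (cm_pos x).le (by linarith)
    have h2 : 0 ≤ cPlus N c lp x * (u (x+1) y - m) :=
      mul_nonneg (cp_pos x).le (by linarith)
    have h3 : 0 ≤ cMinus c lm y * (u x (y-1) - m) :=
      mul_nonneg (cm_pos y).le (by linarith)
    have hyN : y < N - 1 := by
      by_contra hyN'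
      have hye : y = N - 1 := by omega
      have hD0 : u x (y+1) = 0 := by
        rw [show y + 1 = N from by omega]; exact huN x (by omega) (by omega)
      have h4 : 0 < cPlus N c lp y * (u x (y+1) - m) :=
        mul_pos (cp_pos y) (by rw [hD0]; linarith)
      have hint : (0:ℝ) < (N:ℝ)^2 * (cMinus c lm x * (u (x-1) y - m)
          + cPlus N c lp x * (u (x+1) y - m)
          + cMinus c lm y * (u x (y-1) - m)
          + cPlus N c lp y * (u x (y+1) - m)) :=
        mul_pos hN2 (by linarith)
      linarith [heq, hint]
    refine ⟨hyN, ?_⟩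
    by_contra hne
    have hgt : m < u x (y+1) := lt_of_le_of_ne hD (Ne.symm hne)
    have h4 : 0 < cPlus N c lp y * (u x (y+1) - m) := mul_pos (cp_pos y) (by linarith)
    have hint : (0:ℝ) < (N:ℝ)^2 * (cMinus c lm x * (u (x-1) y - m)
        + cPlus N c lp x * (u (x+1) y - m)
        + cMinus c lm y * (u x (y-1) - m)
        + cPlus N c lp y * (u x (y+1) - m)) :=
      mul_pos hN2 (by linarith)
    linarith [heq, hint]
  -- Step C : the minimum cannot be attained strictly above the diagonal
  have stepC : ∀ n : ℕ, ∀ x y : ℤ, 1 ≤ x → x + 1 < y → y ≤ N - 1 →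
      (N - 1 - y).toNat = n → u x y = m → False := by
    intro n
    induction n with
    | zero =>
      intro x y hx hxy hy hn hum
      obtain ⟨hlt, _⟩ := push x y hx hxy hy hum
      omega
    | succ n ih =>
      intro x y hx hxy hy hn hum
      obtain ⟨hlt, heq'⟩ := push x y hx hxy hy hum
      exact ih x (y+1) hx (by omega) (by omega) (by omega) heq'
  -- Conclusion
  obtain ⟨⟨⟨ha1, _⟩, ⟨_, hb2⟩⟩, hab⟩ := hp
  have hb : b ≤ N - 1 := hb2
  rcases eq_or_lt_of_le hab with hd' | hd'
  · exact stepB a ha1 (by omega) (by rw [hm_def, ← hd'])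
  · rcases eq_or_lt_of_le (show a + 1 ≤ b by omega) with he | he
    · exact stepA a ha1 (by omega) (by rw [hm_def, he])
    · exact stepC (N - 1 - b).toNat a b ha1 he hb rfl rfl

end
end

section
/- Assume c > 0, c + d ≥ 0 and λ₋, λ₊ ∈ (0,1]. If u is a function on T_N ∪ ∂T_N that vanishes on ∂T_N and satisfies Δ²ᴰ_N u(x,y) = 0 for every (x,y) ∈ T_N, then u is identically zero; that is, the discrete Dirichlet problem for the absorbed two-dimensional walk has only the trivial harmonic function with zero boundary data. -/
noncomputable section

/-! Weak maximum principle. At an interior maximum point `(x, y)` of `u`, `Δ²ᴰ_N u (x, y)` is a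
combination of the differences `u(q) − u(x, y) ≤ 0` over the neighbours `q` with nonnegative
coefficients (on the upper diagonal the `d`-term merges with the rate `c` into coefficients
`c + d`), and the coefficient of the left neighbour is strictly positive. So if `Δ²ᴰ_N u ≥ 0`,
the maximum is also attained at `(x − 1, y)`, hence by descent at `(0, y)` or on `y = N`, where
`u = 0`. Applying this to `u` and `−u` gives uniqueness. -/

open Finset

theorem cMinus_pos {c lm : ℝ} (hc : 0 < c) (hlm : 0 < lm) (z : ℤ) : 0 < cMinus c lm z := by
  unfold cMinus; split_ifs <;> positivity

theorem cPlus_pos {N : ℤ} {c lp : ℝ} (hc : 0 < c) (hlp : 0 < lp) (z : ℤ) :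
    0 < cPlus N c lp z := by
  unfold cPlus; split_ifs <;> positivity

theorem lap2D_neg (N : ℤ) (c d lm lp : ℝ) (u : ℤ → ℤ → ℝ) (x y : ℤ) :
    lap2D N c d lm lp (fun a b => -u a b) x y = -lap2D N c d lm lp u x y := by
  unfold lap2D
  split_ifs <;> ring

def closedTriangle (N : ℤ) : Finset (ℤ × ℤ) :=
  (Icc 0 N ×ˢ Icc 0 N).filter fun p => p.1 ≤ p.2

theorem mem_closedTriangle {N : ℤ} {p : ℤ × ℤ} :
    p ∈ closedTriangle N ↔ 0 ≤ p.1 ∧ p.1 ≤ p.2 ∧ p.2 ≤ N := by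
  simp only [closedTriangle, mem_filter, mem_product, mem_Icc]
  omega

section MaximumPrinciple

variable {N : ℤ} {c d lm lp : ℝ} {u : ℤ → ℤ → ℝ}

theorem left_eq_of_isMax_of_lap2D_nonneg (hc : 0 < c) (hcd : 0 ≤ c + d) (hlm : 0 < lm)
    (hlp : 0 < lp) {x y : ℤ} (hx : 1 ≤ x) (hxy : x ≤ y) (hy : y ≤ N - 1)
    (hmax : ∀ a b, 0 ≤ a → a ≤ b → b ≤ N → u a b ≤ u x y)
    (hsub : 0 ≤ lap2D N c d lm lp u x y) :
    u (x - 1) y = u x y := by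
  refine le_antisymm (hmax _ _ (by omega) (by omega) (by omega)) (not_lt.1 fun hlt => ?_)
  have hN : 0 < (N : ℝ) ^ 2 := by
    have : (N : ℝ) ≠ 0 := by exact_mod_cast (by omega : N ≠ 0)
    positivity
  have hleft := mul_pos (cMinus_pos hc hlm x) (sub_pos.2 hlt)
  have hnbr {a b : ℤ} (ha : 0 ≤ a) (hab : a ≤ b) (hb : b ≤ N) {k : ℝ} (hk : 0 ≤ k) :
      0 ≤ k * (u x y - u a b) :=
    mul_nonneg hk (sub_nonneg.2 (hmax a b ha hab hb))
  rcases hxy.eq_or_lt with rfl | hne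
  · rw [lap2D, if_pos rfl] at hsub
    have := nonneg_of_mul_nonneg_right hsub (by positivity)
    linarith [hnbr (a := x) (b := x + 1) (by omega) (by omega) (by omega)
      (cPlus_pos hc hlp (N := N) x).le]
  rw [lap2D, if_neg hne.ne] at hsub
  rcases eq_or_ne y (x + 1) with rfl | hdiag
  · have hcm : cMinus c lm (x + 1) = c := if_neg (by omega)
    have hcp : cPlus N c lp x = c := if_neg (by omega)
    rw [if_pos rfl, mul_one, add_sub_cancel_right, hcm, hcp] at hsub
    have := nonneg_of_mul_nonneg_right (a := (N : ℝ) ^ 2)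
      (b := cMinus c lm x * (u (x - 1) (x + 1) - u x (x + 1))
        + (c + d) * (u (x + 1) (x + 1) - u x (x + 1)) + (c + d) * (u x x - u x (x + 1))
        + cPlus N c lp (x + 1) * (u x (x + 1 + 1) - u x (x + 1)))
      (by linear_combination hsub) hN
    linarith [hnbr (a := x + 1) (b := x + 1) (by omega) le_rfl (by omega) hcd,
      hnbr (a := x) (b := x) (by omega) le_rfl (by omega) hcd,
      hnbr (a := x) (b := x + 1 + 1) (by omega) (by omega) (by omega)
        (cPlus_pos hc hlp (N := N) (x + 1)).le]
  · rw [if_neg hdiag, mul_zero, add_zero] at hsub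
    have := nonneg_of_mul_nonneg_right hsub hN
    linarith [hnbr (a := x + 1) (b := y) (by omega) (by omega) (by omega)
        (cPlus_pos hc hlp (N := N) x).le,
      hnbr (a := x) (b := y - 1) (by omega) (by omega) (by omega) (cMinus_pos hc hlm y).le,
      hnbr (a := x) (b := y + 1) (by omega) (by omega) (by omega)
        (cPlus_pos hc hlp (N := N) y).le]

theorem max_eq_zero_of_lap2D_nonneg (hc : 0 < c) (hcd : 0 ≤ c + d) (hlm : 0 < lm)
    (hlp : 0 < lp) (hu0 : ∀ y, 0 ≤ y → y ≤ N → u 0 y = 0)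
    (huN : ∀ x, 0 ≤ x → x ≤ N → u x N = 0)
    (hsub : ∀ x y, 1 ≤ x → x ≤ y → y ≤ N - 1 → 0 ≤ lap2D N c d lm lp u x y) {M : ℝ}
    (hmax : ∀ a b, 0 ≤ a → a ≤ b → b ≤ N → u a b ≤ M) :
    ∀ x, 0 ≤ x → ∀ y, x ≤ y → y ≤ N → u x y = M → M = 0 := by
  refine Int.leInduction ?_ fun x hx ih => ?_
  · intro y hy hyN hM
    rw [← hM, hu0 y hy hyN]
  intro y hxy hyN hM
  rcases hyN.eq_or_lt with rfl | hyN
  · rw [← hM, huN _ (by omega) hxy]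
  subst hM
  have hleft := left_eq_of_isMax_of_lap2D_nonneg hc hcd hlm hlp (by omega) hxy (by omega) hmax
    (hsub _ _ (by omega) hxy (by omega))
  rw [add_sub_cancel_right] at hleft
  exact ih y (by omega) hyN.le hleft

theorem nonpos_of_lap2D_nonneg (hc : 0 < c) (hcd : 0 ≤ c + d) (hlm : 0 < lm)
    (hlp : 0 < lp) (hu0 : ∀ y, 0 ≤ y → y ≤ N → u 0 y = 0)
    (huN : ∀ x, 0 ≤ x → x ≤ N → u x N = 0)
    (hsub : ∀ x y, 1 ≤ x → x ≤ y → y ≤ N - 1 → 0 ≤ lap2D N c d lm lp u x y)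
    {x y : ℤ} (hx : 0 ≤ x) (hxy : x ≤ y) (hy : y ≤ N) : u x y ≤ 0 := by
  obtain ⟨p, hp, hpmax⟩ := (closedTriangle N).exists_max_image (fun p => u p.1 p.2)
    ⟨(x, y), mem_closedTriangle.2 ⟨hx, hxy, hy⟩⟩
  have hmax : ∀ a b, 0 ≤ a → a ≤ b → b ≤ N → u a b ≤ u p.1 p.2 := fun a b ha hab hb =>
    hpmax (a, b) (mem_closedTriangle.2 ⟨ha, hab, hb⟩)
  obtain ⟨hp1, hp12, hp2⟩ := mem_closedTriangle.1 hp
  calc u x y ≤ u p.1 p.2 := hmax x y hx hxy hy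
    _ = 0 := max_eq_zero_of_lap2D_nonneg hc hcd hlm hlp hu0 huN hsub hmax p.1 hp1 p.2 hp12 hp2 rfl

end MaximumPrinciple

theorem dirichlet_uniqueness_general (N : ℤ) (c d : ℝ) (hc : 0 < c)
    (hcd : 0 ≤ c + d) (lm lp : ℝ) (hlm0 : 0 < lm)
    (hlp0 : 0 < lp) (u : ℤ → ℤ → ℝ)
    (hu0 : ∀ y : ℤ, 0 ≤ y → y ≤ N → u 0 y = 0)
    (huN : ∀ x : ℤ, 0 ≤ x → x ≤ N → u x N = 0)
    (hu : ∀ x y : ℤ, 1 ≤ x → x ≤ y → y ≤ N - 1 → lap2D N c d lm lp u x y = 0) :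
    ∀ x y : ℤ, 1 ≤ x → x ≤ y → y ≤ N - 1 → u x y = 0 := by
  intro x y hx hxy hy
  have hle := nonpos_of_lap2D_nonneg hc hcd hlm0 hlp0 hu0 huN
    (fun a b ha hab hb => (hu a b ha hab hb).ge) (by omega) hxy (by omega)
  have hge := nonpos_of_lap2D_nonneg (u := fun a b => -u a b) hc hcd hlm0 hlp0
    (fun b hb hbN => by rw [hu0 b hb hbN, neg_zero])
    (fun a ha haN => by rw [huN a ha haN, neg_zero])
    (fun a b ha hab hb => by rw [lap2D_neg, hu a b ha hab hb, neg_zero])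
    (by omega) hxy (by omega)
  exact le_antisymm hle (neg_nonpos.1 hge)

/-- (Uniqueness for the discrete Dirichlet problem.) Assume `c > 0`,
`c + d ≥ 0` and `λ₋, λ₊ ∈ (0,1]`. If `u` vanishes on `∂T_N` and is `Δ²ᴰ_N`-harmonic on
`T_N`, then `u` is identically zero on `T_N`. -/
theorem dirichlet_uniqueness (N : ℤ) (hN : 5 ≤ N) (c d : ℝ) (hc : 0 < c)
    (hcd : 0 ≤ c + d) (lm lp : ℝ) (hlm0 : 0 < lm) (hlm1 : lm ≤ 1)
    (hlp0 : 0 < lp) (hlp1 : lp ≤ 1) (u : ℤ → ℤ → ℝ)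
    (hu0 : ∀ y : ℤ, 0 ≤ y → y ≤ N → u 0 y = 0)
    (huN : ∀ x : ℤ, 0 ≤ x → x ≤ N → u x N = 0)
    (hu : ∀ x y : ℤ, 1 ≤ x → x ≤ y → y ≤ N - 1 → lap2D N c d lm lp u x y = 0) :
    ∀ x y : ℤ, 1 ≤ x → x ≤ y → y ≤ N - 1 → u x y = 0 :=
  dirichlet_uniqueness_general N c d hc hcd lm lp hlm0 hlp0 u hu0 huN hu

end
end

section
/- Let α ∈ ℕ with α ≥ 1, let ρ ∈ (0, α), set p = ρ/α, and let μ be the product Binomial measure on Ω_N = {0,…,α}^{Λ_N} given by μ(η) = Π_{x ∈ Λ_N} C(α, η(x))·p^{η(x)}·(1−p)^{α−η(x)}. Then μ is invariant for the boundary-driven symmetric partial exclusion process with equal reservoir densities ϱ₋ = ϱ₊ = ρ: for every function f : ℤ^{Λ_N} → ℝ, Σ_{η ∈ Ω_N} μ(η)·((𝓛₀ + 𝓛_b) f)(η) = 0. -/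
/-!
The product Binomial(α, ρ/α) measure `μ` is reversible. For a bulk jump `η → η - δ_x + δ_y` and
for a reservoir jump `η → η ± δ_x` one has detailed balance `μ(η') r(η' → η) = μ(η) r(η → η')`:
only the marginals at the touched sites change, and the required identities reduce to
`C(α, k+1) (k+1) = C(α, k) (α - k)` together with `p (α - ρ) = (1 - p) ρ` for `p = ρ/α`.
Re-indexing `Σ_η μ(η) r(η → η + d) f(η + d)` by the translation `η ↦ η + d` then turns it into
`Σ_η μ(η) r(η → η - d) f(η)`, so each jump cancels against its reverse in `Σ_η μ(η) (𝓛 f)(η)`.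
-/

noncomputable section

/-- The configuration `δ_x` with exactly one particle, located at site `x`. -/
def deltaZ (x : ℤ) : ℤ → ℤ := fun z => if z = x then 1 else 0

/-- The bulk generator `𝓛₀` of the symmetric partial exclusion process (the rates
`r_{x,y}(η) = η(x)(α − η(y))` correspond to `c = α`, `d = −1`). -/
def sepBulk (N : ℤ) (α : ℕ) (f : (ℤ → ℤ) → ℝ) (η : ℤ → ℤ) : ℝ :=
  ∑ x ∈ Finset.Icc (1 : ℤ) (N - 2),
    ((η x : ℝ) * ((α : ℝ) - η (x + 1)) * (f (η - deltaZ x + deltaZ (x + 1)) - f η)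
      + (η (x + 1) : ℝ) * ((α : ℝ) - η x) * (f (η + deltaZ x - deltaZ (x + 1)) - f η))

/-- The boundary generator `𝓛_b` of the symmetric partial exclusion process with
equal reservoir densities `ϱ₋ = ϱ₊ = ρ`. -/
def sepBdry (N : ℤ) (α : ℕ) (lm lp ρ : ℝ) (f : (ℤ → ℤ) → ℝ) (η : ℤ → ℤ) : ℝ :=
  lm * ρ * ((α : ℝ) - η 1) * (f (η + deltaZ 1) - f η)
    + lm * (η 1 : ℝ) * ((α : ℝ) - ρ) * (f (η - deltaZ 1) - f η)
    + lp * ρ * ((α : ℝ) - η (N - 1)) * (f (η + deltaZ (N - 1)) - f η)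
    + lp * (η (N - 1) : ℝ) * ((α : ℝ) - ρ) * (f (η - deltaZ (N - 1)) - f η)

/-- Extension of a configuration on `Λ_N = {1,…,N−1}` with values in `{0,…,α}` to a
configuration on `ℤ` (by zero outside `Λ_N`). -/
def extCfg (N : ℤ) (α : ℕ)
    (η : ((Finset.Icc (1 : ℤ) (N - 1) : Finset ℤ) : Type) →
      ((Finset.Icc (0 : ℤ) (α : ℤ) : Finset ℤ) : Type)) : ℤ → ℤ :=
  fun z => if h : z ∈ Finset.Icc (1 : ℤ) (N - 1) then ((η ⟨z, h⟩ : ℤ)) else 0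


open Finset

section BinomialWeight

variable {R : Type*} [CommRing R]

def binomialWeight (α : ℕ) (p : R) (k : ℕ) : R := α.choose k * p ^ k * (1 - p) ^ (α - k)

variable {α k : ℕ} (p : R)

lemma binomialWeight_succ_mul (hk : k < α) :
    binomialWeight α p (k + 1) * (k + 1)
      = α.choose k * (α - k) * p ^ (k + 1) * (1 - p) ^ (α - (k + 1)) := by
  have hchoose : (α.choose (k + 1) * (k + 1) : R) = α.choose k * (α - k) := by
    simpa [Nat.cast_sub hk.le] using congrArg (Nat.cast : ℕ → R) (Nat.choose_succ_right_eq α k)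
  rw [binomialWeight, ← hchoose]
  ring

lemma binomialWeight_mul_sub (hk : k < α) :
    binomialWeight α p k * (α - k)
      = α.choose k * (α - k) * p ^ k * (1 - p) ^ (α - (k + 1)) * (1 - p) := by
  rw [binomialWeight, show α - k = α - (k + 1) + 1 by omega, pow_succ]
  ring

lemma binomialWeight_mul_binomialWeight_succ {m : ℕ} (hk : k < α) (hm : m < α) :
    binomialWeight α p k * binomialWeight α p (m + 1) * ((m + 1) * (α - k))
      = binomialWeight α p (k + 1) * binomialWeight α p m * ((k + 1) * (α - m)) :=
  calc _ = binomialWeight α p k * (α - k) * (binomialWeight α p (m + 1) * (m + 1)) := by ring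
    _ = binomialWeight α p (k + 1) * (k + 1) * (binomialWeight α p m * (α - m)) := by
      rw [binomialWeight_succ_mul p hk, binomialWeight_succ_mul p hm,
        binomialWeight_mul_sub p hk, binomialWeight_mul_sub p hm]
      ring
    _ = _ := by ring

lemma binomialWeight_succ_mul_div {K : Type*} [Field K] [CharZero K] (ρ : K) (hk : k < α) :
    binomialWeight α (ρ / α) (k + 1) * ((k + 1) * (α - ρ))
      = binomialWeight α (ρ / α) k * ((α - k) * ρ) := by
  have hα : (α : K) ≠ 0 := Nat.cast_ne_zero.mpr (by omega)
  have hp : ρ / α * (α - ρ) = (1 - ρ / α) * ρ := by field_simp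
  calc _ = binomialWeight α (ρ / α) (k + 1) * (k + 1) * (α - ρ) := by ring
    _ = binomialWeight α (ρ / α) k * (α - k) * ρ := by
      rw [binomialWeight_succ_mul _ hk, binomialWeight_mul_sub _ hk]
      linear_combination
        α.choose k * (α - k) * (ρ / α) ^ k * (1 - ρ / α) ^ (α - (k + 1)) * hp
    _ = _ := by ring

end BinomialWeight

section Translation

variable {G R : Type*} [AddCommGroup G] [CommRing R] {s : Finset G} {d : G} {w v : G → R}

lemma sum_mul_comp_add_eq (g : G → R)
    (hfwd : ∀ η ∈ s, w η ≠ 0 → η + d ∈ s ∧ v (η + d) = w η)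
    (hbwd : ∀ η ∈ s, v η ≠ 0 → η - d ∈ s ∧ w (η - d) = v η) :
    ∑ η ∈ s, w η * g (η + d) = ∑ η ∈ s, v η * g η := by
  refine sum_bij_ne_zero (fun η _ _ => η + d)
    (fun η hη hne => (hfwd η hη (left_ne_zero_of_mul hne)).1)
    (fun _ _ _ _ _ _ h => add_right_cancel h) (fun η hη hne => ?_)
    (fun η hη hne => by rw [(hfwd η hη (left_ne_zero_of_mul hne)).2])
  obtain ⟨hmem, hw⟩ := hbwd η hη (left_ne_zero_of_mul hne)
  exact ⟨η - d, hmem, by rwa [sub_add_cancel, hw], sub_add_cancel η d⟩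

lemma sum_jump_pair_eq_zero (g : G → R)
    (hfwd : ∀ η ∈ s, w η ≠ 0 → η + d ∈ s ∧ v (η + d) = w η)
    (hbwd : ∀ η ∈ s, v η ≠ 0 → η - d ∈ s ∧ w (η - d) = v η) :
    ∑ η ∈ s, (w η * (g (η + d) - g η) + v η * (g (η - d) - g η)) = 0 := by
  have hforward := sum_mul_comp_add_eq g hfwd hbwd
  have hbackward : ∑ η ∈ s, v η * g (η - d) = ∑ η ∈ s, w η * g η := by
    simpa only [← sub_eq_add_neg] using sum_mul_comp_add_eq (d := -d) (w := v) (v := w) g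
      (by simpa only [← sub_eq_add_neg] using hbwd) (by simpa only [sub_neg_eq_add] using hfwd)
  simp only [mul_sub, sum_add_distrib, sum_sub_distrib, hforward, hbackward]
  ring

end Translation

section Configurations

variable {N : ℤ} {α : ℕ}

open scoped Classical in
def configs (N : ℤ) (α : ℕ) : Finset (ℤ → ℤ) := univ.image (extCfg N α)

lemma mem_configs {η : ℤ → ℤ} :
    η ∈ configs N α ↔
      (∀ z ∈ Icc 1 (N - 1), 0 ≤ η z ∧ η z ≤ α) ∧ ∀ z ∉ Icc 1 (N - 1), η z = 0 := by
  classical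
  constructor
  · rintro hη
    obtain ⟨ξ, -, rfl⟩ := mem_image.mp hη
    refine ⟨fun z hz => ?_, fun z hz => dif_neg hz⟩
    simpa [extCfg, hz] using mem_Icc.mp (ξ ⟨z, hz⟩).2
  · rintro ⟨hin, hout⟩
    refine mem_image.mpr ⟨fun z => ⟨η z, mem_Icc.mpr (hin z z.2)⟩, mem_univ _, funext fun z => ?_⟩
    by_cases hz : z ∈ Icc 1 (N - 1)
    · simp [extCfg, hz]
    · simp [extCfg, hz, hout z hz]

lemma extCfg_injective : Function.Injective (extCfg N α) := fun ξ ξ' h =>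
  funext fun z => Subtype.ext <| by simpa [extCfg, z.2] using congrFun h z

lemma sum_extCfg {M : Type*} [AddCommMonoid M] (F : (ℤ → ℤ) → M) :
    ∑ ξ, F (extCfg N α ξ) = ∑ η ∈ configs N α, F η := by
  classical
  exact (sum_image fun _ _ _ _ h => extCfg_injective h).symm

lemma add_deltaZ_mem_configs {η : ℤ → ℤ} {x : ℤ} (hη : η ∈ configs N α)
    (hx : x ∈ Icc 1 (N - 1)) (h : η x < α) : η + deltaZ x ∈ configs N α := by
  obtain ⟨hin, hout⟩ := mem_configs.mp hη
  refine mem_configs.mpr ⟨fun z hz => ?_, fun z hz => ?_⟩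
  · have := hin z hz
    by_cases hzx : z = x
    · subst hzx
      simp only [Pi.add_apply, deltaZ, ↓reduceIte]
      omega
    · simpa [deltaZ, hzx] using this
  · simp [deltaZ, hout z hz, show z ≠ x by rintro rfl; exact hz hx]

lemma sub_deltaZ_mem_configs {η : ℤ → ℤ} {x : ℤ} (hη : η ∈ configs N α)
    (hx : x ∈ Icc 1 (N - 1)) (h : 0 < η x) : η - deltaZ x ∈ configs N α := by
  obtain ⟨hin, hout⟩ := mem_configs.mp hη
  refine mem_configs.mpr ⟨fun z hz => ?_, fun z hz => ?_⟩
  · have := hin z hz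
    by_cases hzx : z = x
    · subst hzx
      simp only [Pi.sub_apply, deltaZ, ↓reduceIte]
      omega
    · simpa [deltaZ, hzx] using this
  · simp [deltaZ, hout z hz, show z ≠ x by rintro rfl; exact hz hx]

end Configurations

section ProductBinomial

variable {N : ℤ} {α : ℕ} (p : ℝ)

def productBinomial (N : ℤ) (α : ℕ) (p : ℝ) (η : ℤ → ℤ) : ℝ :=
  ∏ x ∈ Icc 1 (N - 1), binomialWeight α p (η x).toNat

lemma productBinomial_extCfg (ξ : ((Icc (1 : ℤ) (N - 1) : Finset ℤ) : Type) →
      ((Icc (0 : ℤ) (α : ℤ) : Finset ℤ) : Type)) :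
    productBinomial N α p (extCfg N α ξ) = ∏ x, binomialWeight α p (ξ x : ℤ).toNat := by
  rw [productBinomial, ← prod_coe_sort]
  exact prod_congr rfl fun x _ => by simp [extCfg, x.2]

lemma productBinomial_eq_prod_mul_prod_sdiff {η η' : ℤ → ℤ} {t : Finset ℤ}
    (ht : t ⊆ Icc 1 (N - 1)) (h : ∀ z ∉ t, η' z = η z) :
    productBinomial N α p η' = (∏ x ∈ t, binomialWeight α p (η' x).toNat)
      * ∏ x ∈ Icc 1 (N - 1) \ t, binomialWeight α p (η x).toNat := by
  rw [productBinomial, ← prod_sdiff ht, mul_comm]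
  congr 1
  exact prod_congr rfl fun z hz => by rw [h z (mem_sdiff.mp hz).2]

variable {η : ℤ → ℤ} {x y : ℤ}

lemma productBinomial_sub_deltaZ_add_deltaZ (hη : η ∈ configs N α)
    (hx : x ∈ Icc 1 (N - 1)) (hy : y ∈ Icc 1 (N - 1)) (hxy : x ≠ y)
    (hx0 : 0 < η x) (hyα : η y < α) :
    productBinomial N α p (η - deltaZ x + deltaZ y) * (((η y : ℝ) + 1) * (α - ((η x : ℝ) - 1)))
      = productBinomial N α p η * (η x * (α - η y)) := by
  obtain ⟨k, hk⟩ : ∃ k : ℕ, η x = (k + 1 : ℕ) := ⟨(η x - 1).toNat, by omega⟩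
  obtain ⟨m, hm⟩ : ∃ m : ℕ, η y = m :=
    ⟨(η y).toNat, by have := ((mem_configs.mp hη).1 y hy).1; omega⟩
  have hkα : k < α := by have := ((mem_configs.mp hη).1 x hx).2; omega
  have hmα : m < α := by omega
  have hpair : ({x, y} : Finset ℤ) ⊆ Icc 1 (N - 1) := insert_subset hx (singleton_subset_iff.mpr hy)
  have hmoved : ∀ z ∉ ({x, y} : Finset ℤ), (η - deltaZ x + deltaZ y) z = η z := by
    intro z hz
    simp only [mem_insert, mem_singleton, not_or] at hz
    simp [deltaZ, hz.1, hz.2]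
  have hvx : (η - deltaZ x + deltaZ y) x = (k : ℕ) := by simp [deltaZ, hxy, hk]
  have hvy : (η - deltaZ x + deltaZ y) y = (m + 1 : ℕ) := by simp [deltaZ, hxy.symm, hm]
  rw [productBinomial_eq_prod_mul_prod_sdiff p hpair hmoved,
    productBinomial_eq_prod_mul_prod_sdiff p hpair (fun _ _ => rfl), prod_pair hxy, prod_pair hxy,
    hvx, hvy, hk, hm]
  simp only [Int.toNat_natCast]
  push_cast
  linear_combination (∏ z ∈ Icc 1 (N - 1) \ {x, y}, binomialWeight α p (η z).toNat)
    * binomialWeight_mul_binomialWeight_succ p hkα hmα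

lemma productBinomial_add_deltaZ (ρ : ℝ) (hη : η ∈ configs N α) (hx : x ∈ Icc 1 (N - 1))
    (hxα : η x < α) :
    productBinomial N α (ρ / α) (η + deltaZ x) * (((η x : ℝ) + 1) * (α - ρ))
      = productBinomial N α (ρ / α) η * ((α - η x) * ρ) := by
  obtain ⟨k, hk⟩ : ∃ k : ℕ, η x = k :=
    ⟨(η x).toNat, by have := ((mem_configs.mp hη).1 x hx).1; omega⟩
  have hkα : k < α := by omega
  have hmoved : ∀ z ∉ ({x} : Finset ℤ), (η + deltaZ x) z = η z := by
    intro z hz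
    simp [deltaZ, mem_singleton.not.mp hz]
  have hvx : (η + deltaZ x) x = (k + 1 : ℕ) := by simp [deltaZ, hk]
  rw [productBinomial_eq_prod_mul_prod_sdiff _ (singleton_subset_iff.mpr hx) hmoved,
    productBinomial_eq_prod_mul_prod_sdiff _ (singleton_subset_iff.mpr hx) (fun _ _ => rfl),
    prod_singleton, prod_singleton, hvx, hk]
  simp only [Int.toNat_natCast]
  push_cast
  linear_combination (∏ z ∈ Icc 1 (N - 1) \ {x}, binomialWeight α (ρ / α) (η z).toNat)
    * binomialWeight_succ_mul_div ρ hkα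

end ProductBinomial

section Generators

variable {N : ℤ} {α : ℕ} (f : (ℤ → ℤ) → ℝ)

def bondGenerator (α : ℕ) (x y : ℤ) (f : (ℤ → ℤ) → ℝ) (η : ℤ → ℤ) : ℝ :=
  (η x : ℝ) * ((α : ℝ) - η y) * (f (η - deltaZ x + deltaZ y) - f η)
    + (η y : ℝ) * ((α : ℝ) - η x) * (f (η + deltaZ x - deltaZ y) - f η)

def reservoirGenerator (α : ℕ) (lam ρ : ℝ) (x : ℤ) (f : (ℤ → ℤ) → ℝ) (η : ℤ → ℤ) : ℝ :=
  lam * ρ * ((α : ℝ) - η x) * (f (η + deltaZ x) - f η)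
    + lam * (η x : ℝ) * ((α : ℝ) - ρ) * (f (η - deltaZ x) - f η)

lemma sepBulk_eq_sum_bondGenerator (η : ℤ → ℤ) :
    sepBulk N α f η = ∑ x ∈ Icc 1 (N - 2), bondGenerator α x (x + 1) f η := rfl

lemma sepBdry_eq_add_reservoirGenerator (lm lp ρ : ℝ) (η : ℤ → ℤ) :
    sepBdry N α lm lp ρ f η
      = reservoirGenerator α lm ρ 1 f η + reservoirGenerator α lp ρ (N - 1) f η :=
  add_assoc _ _ _

variable {x y : ℤ} (p : ℝ)

lemma productBinomial_bond_balance (hx : x ∈ Icc 1 (N - 1)) (hy : y ∈ Icc 1 (N - 1))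
    (hxy : x ≠ y) (η : ℤ → ℤ) (hη : η ∈ configs N α)
    (hne : productBinomial N α p η * (η x * (α - η y)) ≠ 0) :
    η + (deltaZ y - deltaZ x) ∈ configs N α ∧
      productBinomial N α p (η + (deltaZ y - deltaZ x))
          * ((η + (deltaZ y - deltaZ x)) y * (α - (η + (deltaZ y - deltaZ x)) x))
        = productBinomial N α p η * (η x * (α - η y)) := by
  have hx0 : 0 < η x := by
    have := ((mem_configs.mp hη).1 x hx).1
    have : η x ≠ 0 := by rintro h; simp [h] at hne
    omega
  have hyα : η y < α := by
    have := ((mem_configs.mp hη).1 y hy).2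
    have : η y ≠ α := by rintro h; simp [h] at hne
    omega
  rw [show η + (deltaZ y - deltaZ x) = η - deltaZ x + deltaZ y by abel]
  refine ⟨add_deltaZ_mem_configs (sub_deltaZ_mem_configs hη hx hx0) hy
    (by simpa [deltaZ, hxy.symm] using hyα), ?_⟩
  have hvx : (η - deltaZ x + deltaZ y) x = η x - 1 := by simp [deltaZ, hxy]
  have hvy : (η - deltaZ x + deltaZ y) y = η y + 1 := by simp [deltaZ, hxy.symm]
  rw [hvx, hvy]
  push_cast
  exact productBinomial_sub_deltaZ_add_deltaZ p hη hx hy hxy hx0 hyα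

lemma sum_productBinomial_mul_bondGenerator (hx : x ∈ Icc 1 (N - 1))
    (hy : y ∈ Icc 1 (N - 1)) (hxy : x ≠ y) :
    ∑ η ∈ configs N α, productBinomial N α p η * bondGenerator α x y f η = 0 := by
  have hbwd := productBinomial_bond_balance (α := α) p hy hx hxy.symm
  simp only [show ∀ η : ℤ → ℤ, η + (deltaZ x - deltaZ y) = η - (deltaZ y - deltaZ x) from
    fun η => by abel] at hbwd
  rw [← sum_jump_pair_eq_zero (w := fun η => productBinomial N α p η * (η x * (α - η y)))
    (v := fun η => productBinomial N α p η * (η y * (α - η x))) f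
    (productBinomial_bond_balance p hx hy hxy) hbwd]
  refine sum_congr rfl fun η _ => ?_
  rw [bondGenerator, show η - deltaZ x + deltaZ y = η + (deltaZ y - deltaZ x) by abel,
    show η + deltaZ x - deltaZ y = η - (deltaZ y - deltaZ x) by abel]
  ring

lemma productBinomial_reservoir_balance (lam ρ : ℝ) (hx : x ∈ Icc 1 (N - 1)) (η : ℤ → ℤ)
    (hη : η ∈ configs N α) (hne : productBinomial N α (ρ / α) η * (lam * ρ * (α - η x)) ≠ 0) :
    η + deltaZ x ∈ configs N α ∧
      productBinomial N α (ρ / α) (η + deltaZ x) * (lam * (η + deltaZ x) x * (α - ρ))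
        = productBinomial N α (ρ / α) η * (lam * ρ * (α - η x)) := by
  have hxα : η x < α := by
    have := ((mem_configs.mp hη).1 x hx).2
    have : η x ≠ α := by rintro h; simp [h] at hne
    omega
  refine ⟨add_deltaZ_mem_configs hη hx hxα, ?_⟩
  have hvx : (η + deltaZ x) x = η x + 1 := by simp [deltaZ]
  rw [hvx]
  push_cast
  linear_combination lam * productBinomial_add_deltaZ ρ hη hx hxα

lemma sum_productBinomial_mul_reservoirGenerator (lam ρ : ℝ) (hx : x ∈ Icc 1 (N - 1)) :
    ∑ η ∈ configs N α, productBinomial N α (ρ / α) η * reservoirGenerator α lam ρ x f η = 0 := by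
  have hbwd : ∀ η ∈ configs N α, productBinomial N α (ρ / α) η * (lam * η x * (α - ρ)) ≠ 0 →
      η - deltaZ x ∈ configs N α ∧
        productBinomial N α (ρ / α) (η - deltaZ x) * (lam * ρ * (α - (η - deltaZ x) x))
          = productBinomial N α (ρ / α) η * (lam * η x * (α - ρ)) := by
    intro η hη hne
    have hx0 : 0 < η x := by
      have := ((mem_configs.mp hη).1 x hx).1
      have : η x ≠ 0 := by rintro h; simp [h] at hne
      omega
    have hη' := sub_deltaZ_mem_configs hη hx hx0
    have hvx : (η - deltaZ x) x = η x - 1 := by simp [deltaZ]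
    have hbalance := productBinomial_add_deltaZ ρ hη' hx
      (by rw [hvx]; have := ((mem_configs.mp hη).1 x hx).2; omega)
    rw [sub_add_cancel, hvx] at hbalance
    refine ⟨hη', ?_⟩
    rw [hvx]
    push_cast at hbalance ⊢
    linear_combination -lam * hbalance
  rw [← sum_jump_pair_eq_zero (w := fun η => productBinomial N α (ρ / α) η * (lam * ρ * (α - η x)))
    (v := fun η => productBinomial N α (ρ / α) η * (lam * η x * (α - ρ))) f
    (productBinomial_reservoir_balance lam ρ hx) hbwd]
  refine sum_congr rfl fun η _ => ?_
  rw [reservoirGenerator]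
  ring

end Generators

theorem sep_binomial_invariant_general (N : ℤ) (hN : 5 ≤ N) (α : ℕ) (ρ : ℝ) (lm lp : ℝ)
    (f : (ℤ → ℤ) → ℝ) :
    ∑ η : ((Finset.Icc (1 : ℤ) (N - 1) : Finset ℤ) : Type) →
        ((Finset.Icc (0 : ℤ) (α : ℤ) : Finset ℤ) : Type),
      (∏ x : ((Finset.Icc (1 : ℤ) (N - 1) : Finset ℤ) : Type),
          ((α.choose ((η x : ℤ)).toNat : ℝ) * (ρ / α) ^ ((η x : ℤ)).toNat
            * (1 - ρ / α) ^ (α - ((η x : ℤ)).toNat)))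
        * (sepBulk N α f (extCfg N α η) + sepBdry N α lm lp ρ f (extCfg N α η)) = 0 := by
  have hleft : (1 : ℤ) ∈ Icc 1 (N - 1) := mem_Icc.mpr ⟨le_rfl, by omega⟩
  have hright : N - 1 ∈ Icc 1 (N - 1) := mem_Icc.mpr ⟨by omega, le_rfl⟩
  have hbond : ∀ x ∈ Icc 1 (N - 2), ∑ η ∈ configs N α,
      productBinomial N α (ρ / α) η * bondGenerator α x (x + 1) f η = 0 := fun x hx => by
    obtain ⟨hx1, hx2⟩ := mem_Icc.mp hx
    exact sum_productBinomial_mul_bondGenerator f _ (mem_Icc.mpr ⟨hx1, by omega⟩)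
      (mem_Icc.mpr ⟨by omega, by omega⟩) (by omega)
  simp only [← binomialWeight.eq_1, ← productBinomial_extCfg]
  rw [sum_extCfg fun η =>
    productBinomial N α (ρ / α) η * (sepBulk N α f η + sepBdry N α lm lp ρ f η)]
  simp only [sepBulk_eq_sum_bondGenerator, sepBdry_eq_add_reservoirGenerator, mul_add, mul_sum,
    sum_add_distrib]
  rw [sum_comm, sum_eq_zero hbond, sum_productBinomial_mul_reservoirGenerator f lm ρ hleft,
    sum_productBinomial_mul_reservoirGenerator f lp ρ hright]
  norm_num

/-- With `p = ρ/α`, the product Binomial`(α, p)` measure on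
`Ω_N = {0,…,α}^{Λ_N}` is invariant for the boundary-driven symmetric partial exclusion
process with equal reservoir densities `ϱ₋ = ϱ₊ = ρ`: for every `f : ℤ^{Λ_N} → ℝ`,
`Σ_{η ∈ Ω_N} μ(η) ((𝓛₀ + 𝓛_b) f)(η) = 0`. -/
theorem sep_binomial_invariant (N : ℤ) (hN : 5 ≤ N) (α : ℕ) (hα : 1 ≤ α)
    (ρ : ℝ) (hρ0 : 0 < ρ) (hρα : ρ < α)
    (lm lp : ℝ) (hlm0 : 0 < lm) (hlm1 : lm ≤ 1) (hlp0 : 0 < lp) (hlp1 : lp ≤ 1)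
    (f : (ℤ → ℤ) → ℝ) :
    ∑ η : ((Finset.Icc (1 : ℤ) (N - 1) : Finset ℤ) : Type) →
        ((Finset.Icc (0 : ℤ) (α : ℤ) : Finset ℤ) : Type),
      (∏ x : ((Finset.Icc (1 : ℤ) (N - 1) : Finset ℤ) : Type),
          ((α.choose ((η x : ℤ)).toNat : ℝ) * (ρ / α) ^ ((η x : ℤ)).toNat
            * (1 - ρ / α) ^ (α - ((η x : ℤ)).toNat)))
        * (sepBulk N α f (extCfg N α η) + sepBdry N α lm lp ρ f (extCfg N α η)) = 0 :=
  sep_binomial_invariant_general N hN α ρ lm lp f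
end
end

section
/- Let S be a finite set and A : S × S → ℝ a matrix with A(i,j) ≥ 0 for all i ≠ j and Σ_j A(i,j) ≤ 0 for all i (a substochastic generator matrix). Let D ⊆ S and suppose u : S → ℝ satisfies u ≥ 0 and (A u)(i) = −1_{i ∈ D} for all i ∈ S. Let g : [0,∞) → ℝ^S be continuous with g_t(i) = 0 whenever i ∉ D, and let φ : [0,∞) → ℝ^S be differentiable with φ'_t = A φ_t + g_t for all t ≥ 0. Then for every t ≥ 0, max_{i ∈ S} |φ_t(i)| ≤ max_{i ∈ S} |φ_0(i)| + ( sup_{0 ≤ s ≤ t} max_{i ∈ D} |g_s(i)| )·max_{i ∈ S} u(i). -/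
/-!
Let `M = max |φ₀|`, `G = sup |g|` over `[0, t] × D`, and `ρ = 1_D`. Since `A u = -ρ` and the
row sums of `A` are `≤ 0`, we get `A (M + G u) ≤ -G ρ ≤ -|g|`, so `±φ - (M + G u)` are
subsolutions of `ψ' = A ψ` that are `≤ 0` at time `0`. Such a subsolution stays `≤ 0`: at the
first time a coordinate of `ψ - ε eˢ` reaches `0`, all the others are `≤ 0`, so the nonnegative
off-diagonal entries of `A` make its derivative there negative, which is impossible.
-/

open Set Real

theorem IsMaxOn.hasDerivWithinAt_Icc_right_nonneg {f : ℝ → ℝ} {a b d : ℝ} (hab : a < b)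
    (hmax : IsMaxOn f (Icc a b) b) (hf : HasDerivWithinAt f d (Icc a b) b) : 0 ≤ d := by
  have hcone : a - b ∈ posTangentConeAt (Icc a b) b :=
    sub_mem_posTangentConeAt_of_segment_subset
      ((segment_symm ℝ b a).trans (segment_eq_Icc hab.le)).subset
  have h : (a - b) * d ≤ 0 := by
    simpa using hmax.localize.hasFDerivWithinAt_nonpos hf.hasFDerivWithinAt hcone
  exact nonneg_of_mul_nonpos_right h (sub_neg.2 hab)

section MaximumPrinciple

variable {S : Type*}

theorem forall_lt_zero_of_deriv_neg_at_touch [Finite S] {w w' : ℝ → S → ℝ} {a b : ℝ}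
    (hw : ∀ s ∈ Icc a b, ∀ i, HasDerivWithinAt (w · i) (w' s i) (Icc a b) s)
    (htouch : ∀ s ∈ Ioc a b, ∀ i, (∀ j, w s j ≤ 0) → w s i = 0 → w' s i < 0)
    (ha : ∀ i, w a i < 0) : ∀ s ∈ Icc a b, ∀ i, w s i < 0 := by
  by_contra! ⟨s₀, hs₀, i₀, hi₀⟩
  have hcont : ∀ i, ContinuousOn (w · i) (Icc a b) := fun i s hs =>
    (hw s hs i).continuousWithinAt
  set E := ⋃ i, Icc a b ∩ (w · i) ⁻¹' Ici 0
  have hE : IsCompact E :=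
    isCompact_Icc.of_isClosed_subset
      (isClosed_iUnion_of_finite fun i =>
        (hcont i).preimage_isClosed_of_isClosed isClosed_Icc isClosed_Ici)
      (iUnion_subset fun i => inter_subset_left)
  obtain ⟨T, hTE, hTmin⟩ := hE.exists_isLeast ⟨s₀, mem_iUnion.2 ⟨i₀, hs₀, hi₀⟩⟩
  obtain ⟨i, hT, hi⟩ := mem_iUnion.1 hTE
  have hbefore : ∀ s ∈ Ico a T, ∀ j, w s j < 0 := fun s hs j => by
    by_contra! h
    have hsE : s ∈ E := mem_iUnion.2 ⟨j, ⟨hs.1, hs.2.le.trans hT.2⟩, (h : 0 ≤ w s j)⟩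
    exact (hTmin hsE).not_gt hs.2
  have haT : a < T := hT.1.lt_of_ne fun h => (ha i).not_ge (h ▸ hi)
  have hsub : Icc a T ⊆ Icc a b := Icc_subset_Icc_right hT.2
  have hatT : ∀ j, w T j ≤ 0 := fun j => by
    have hclosed : IsClosed (Icc a T ∩ (w · j) ⁻¹' Iic 0) :=
      ((hcont j).mono hsub).preimage_isClosed_of_isClosed isClosed_Icc isClosed_Iic
    have hT_cl : T ∈ closure (Ico a T) := by
      rw [closure_Ico haT.ne]
      exact right_mem_Icc.2 haT.le
    have hIco : Ico a T ⊆ Icc a T ∩ (w · j) ⁻¹' Iic 0 := fun s hs =>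
      ⟨Ico_subset_Icc_self hs, (hbefore s hs j).le⟩
    exact (closure_minimal hIco hclosed hT_cl).2
  have hiT : w T i = 0 := le_antisymm (hatT i) hi
  have hmax : IsMaxOn (w · i) (Icc a T) T := fun s hs => show w s i ≤ w T i by
    rcases hs.2.eq_or_lt with rfl | hlt
    · exact le_rfl
    · simpa [hiT] using (hbefore s ⟨hs.1, hlt⟩ i).le
  exact (htouch T ⟨haT, hT.2⟩ i hatT hiT).not_ge
    (hmax.hasDerivWithinAt_Icc_right_nonneg haT ((hw T hT i).mono hsub))

variable [Fintype S] {A : S → S → ℝ}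

theorem sum_mul_nonpos_of_offDiag_nonneg (hA : ∀ i j, i ≠ j → 0 ≤ A i j) {w : S → ℝ}
    (hw : ∀ j, w j ≤ 0) {i : S} (hi : w i = 0) : ∑ j, A i j * w j ≤ 0 :=
  Finset.sum_nonpos fun j _ => by
    rcases eq_or_ne i j with rfl | hij
    · simp [hi]
    · exact mul_nonpos_of_nonneg_of_nonpos (hA i j hij) (hw j)

theorem nonpos_of_hasDerivWithinAt_le_sum_mul (hA₁ : ∀ i j, i ≠ j → 0 ≤ A i j)
    (hA₂ : ∀ i, ∑ j, A i j ≤ 0) {ψ ψ' : ℝ → S → ℝ} {a b : ℝ}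
    (hψ : ∀ s ∈ Icc a b, ∀ i, HasDerivWithinAt (ψ · i) (ψ' s i) (Icc a b) s)
    (hsub : ∀ s ∈ Icc a b, ∀ i, ψ' s i ≤ ∑ j, A i j * ψ s j)
    (ha : ∀ i, ψ a i ≤ 0) : ∀ s ∈ Icc a b, ∀ i, ψ s i ≤ 0 := by
  intro s hs i
  refine le_of_forall_pos_lt_add fun δ hδ => ?_
  set ε := δ / exp s
  have hε : 0 < ε := div_pos hδ (exp_pos s)
  have htouch : ∀ r ∈ Ioc a b, ∀ i, (∀ j, ψ r j - ε * exp r ≤ 0) →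
      ψ r i - ε * exp r = 0 → ψ' r i - ε * exp r < 0 := by
    intro r hr i hle hzero
    have hsplit : ∑ j, A i j * ψ r j =
        ∑ j, A i j * (ψ r j - ε * exp r) + ε * exp r * ∑ j, A i j := by
      rw [Finset.mul_sum, ← Finset.sum_add_distrib]
      exact Finset.sum_congr rfl fun j _ => by ring
    have h₁ := sum_mul_nonpos_of_offDiag_nonneg hA₁ hle hzero
    have h₂ := mul_nonpos_of_nonneg_of_nonpos (by positivity : 0 ≤ ε * exp r) (hA₂ i)
    linarith [hsub r (Ioc_subset_Icc_self hr) i, mul_pos hε (exp_pos r)]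
  have hneg := forall_lt_zero_of_deriv_neg_at_touch
    (w := fun r j => ψ r j - ε * exp r) (w' := fun r j => ψ' r j - ε * exp r)
    (fun r hr j => (hψ r hr j).sub ((hasDerivAt_exp r).const_mul ε).hasDerivWithinAt)
    htouch (fun j => by linarith [ha j, mul_pos hε (exp_pos a)]) s hs i
  have hεs : ε * exp s = δ := div_mul_cancel₀ δ (exp_pos s).ne'
  simp only [hεs] at hneg
  linarith

variable {ρ u : S → ℝ} {M G a b : ℝ} {g φ : ℝ → S → ℝ}

theorem le_add_mul_of_hasDerivWithinAt (hA₁ : ∀ i j, i ≠ j → 0 ≤ A i j)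
    (hA₂ : ∀ i, ∑ j, A i j ≤ 0) (hu : ∀ i, ∑ j, A i j * u j = -ρ i) (hM : 0 ≤ M)
    (hφ : ∀ s ∈ Icc a b, ∀ i,
      HasDerivWithinAt (φ · i) (∑ j, A i j * φ s j + g s i) (Icc a b) s)
    (hg : ∀ s ∈ Icc a b, ∀ i, g s i ≤ G * ρ i) (ha : ∀ i, φ a i ≤ M + G * u i) :
    ∀ s ∈ Icc a b, ∀ i, φ s i ≤ M + G * u i := by
  have hsub : ∀ s ∈ Icc a b, ∀ i,
      ∑ j, A i j * φ s j + g s i ≤ ∑ j, A i j * (φ s j - (M + G * u j)) := by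
    intro s hs i
    have hsplit : ∑ j, A i j * (φ s j - (M + G * u j)) =
        ∑ j, A i j * φ s j - M * ∑ j, A i j - G * ∑ j, A i j * u j := by
      rw [Finset.mul_sum, Finset.mul_sum, ← Finset.sum_sub_distrib, ← Finset.sum_sub_distrib]
      exact Finset.sum_congr rfl fun j _ => by ring
    rw [hsplit, hu]
    linarith [hg s hs i, mul_nonpos_of_nonneg_of_nonpos hM (hA₂ i)]
  intro s hs i
  have := nonpos_of_hasDerivWithinAt_le_sum_mul hA₁ hA₂
    (fun s hs i => (hφ s hs i).sub_const (M + G * u i)) hsub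
    (fun i => sub_nonpos.2 (ha i)) s hs i
  linarith

theorem abs_le_add_mul_of_hasDerivWithinAt (hA₁ : ∀ i j, i ≠ j → 0 ≤ A i j)
    (hA₂ : ∀ i, ∑ j, A i j ≤ 0) (hu : ∀ i, ∑ j, A i j * u j = -ρ i) (hM : 0 ≤ M)
    (hφ : ∀ s ∈ Icc a b, ∀ i,
      HasDerivWithinAt (φ · i) (∑ j, A i j * φ s j + g s i) (Icc a b) s)
    (hg : ∀ s ∈ Icc a b, ∀ i, |g s i| ≤ G * ρ i) (ha : ∀ i, |φ a i| ≤ M + G * u i) :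
    ∀ s ∈ Icc a b, ∀ i, |φ s i| ≤ M + G * u i := by
  have hφneg : ∀ s ∈ Icc a b, ∀ i, HasDerivWithinAt (-φ · i)
      (∑ j, A i j * -φ s j + -g s i) (Icc a b) s := fun s hs i => by
    refine (hφ s hs i).neg.congr_deriv ?_
    simp only [mul_neg, Finset.sum_neg_distrib, neg_add]
  intro s hs i
  refine abs_le.2 ⟨neg_le.1 ?_, ?_⟩
  · exact le_add_mul_of_hasDerivWithinAt hA₁ hA₂ hu hM hφneg
      (fun s hs i => (neg_le_abs _).trans (hg s hs i))
      (fun i => (neg_le_abs _).trans (ha i)) s hs i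
  · exact le_add_mul_of_hasDerivWithinAt hA₁ hA₂ hu hM hφ
      (fun s hs i => (le_abs_self _).trans (hg s hs i))
      (fun i => (le_abs_self _).trans (ha i)) s hs i

end MaximumPrinciple

theorem abs_le_iSup_iSup_of_continuousOn {X S : Type*} [TopologicalSpace X] [Fintype S]
    {K : Set X} (hK : IsCompact K) {g : X → S → ℝ} (hg : ContinuousOn g K) (D : Finset S)
    {x : X} (hx : x ∈ K) {i : S} (hi : i ∈ D) :
    |g x i| ≤ ⨆ y : K, ⨆ j : D, |g y j| := by
  obtain ⟨C, hC⟩ := hK.exists_bound_of_continuousOn hg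
  have hbdd : BddAbove (range fun y : K => ⨆ j : D, |g y j|) :=
    ⟨C, forall_mem_range.2 fun y => Real.iSup_le
      (fun j => by simpa using (norm_le_pi_norm (g y) j).trans (hC y y.2))
      ((norm_nonneg _).trans (hC y y.2))⟩
  exact le_ciSup_of_le hbdd ⟨x, hx⟩
    (le_ciSup (Finite.bddAbove_range fun j : D => |g x j|) ⟨i, hi⟩)

theorem duhamel_occupation_estimate_general {S : Type*} [Fintype S] [DecidableEq S]
    (A : S → S → ℝ) (hA1 : ∀ i j, i ≠ j → 0 ≤ A i j) (hA2 : ∀ i, ∑ j, A i j ≤ 0)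
    (D : Finset S) (u : S → ℝ) (hu0 : ∀ i, 0 ≤ u i)
    (hu : ∀ i, ∑ j, A i j * u j = -(if i ∈ D then 1 else 0))
    (g : ℝ → S → ℝ) (hgcont : ContinuousOn g (Set.Ici 0))
    (hgD : ∀ t, 0 ≤ t → ∀ i, i ∉ D → g t i = 0)
    (φ : ℝ → S → ℝ)
    (hφ : ∀ t, 0 ≤ t → ∀ i, HasDerivWithinAt (fun s => φ s i)
      ((∑ j, A i j * φ t j) + g t i) (Set.Ici 0) t) :
    ∀ t, 0 ≤ t → ∀ i, |φ t i| ≤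
      (⨆ j, |φ 0 j|)
        + (⨆ s : Set.Icc (0 : ℝ) t, ⨆ j : D, |g (s : ℝ) (j : S)|) * ⨆ j, u j := by
  intro t ht i
  set M := ⨆ j, |φ 0 j|
  set G := ⨆ s : Set.Icc (0 : ℝ) t, ⨆ j : D, |g (s : ℝ) (j : S)|
  have hM : 0 ≤ M := Real.iSup_nonneg fun j => abs_nonneg _
  have hG : 0 ≤ G := Real.iSup_nonneg fun s => Real.iSup_nonneg fun j => abs_nonneg _
  have hgG : ∀ s ∈ Icc 0 t, ∀ j, |g s j| ≤ G * if j ∈ D then 1 else 0 := by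
    intro s hs j
    split_ifs with hj
    · simpa using abs_le_iSup_iSup_of_continuousOn isCompact_Icc
        (hgcont.mono Icc_subset_Ici_self) D hs hj
    · simp [hgD s hs.1 j hj]
  have hφ0 : ∀ j, |φ 0 j| ≤ M + G * u j := fun j =>
    (le_ciSup (Finite.bddAbove_range fun j => |φ 0 j|) j).trans
      (le_add_of_nonneg_right (mul_nonneg hG (hu0 j)))
  calc |φ t i| ≤ M + G * u i :=
        abs_le_add_mul_of_hasDerivWithinAt hA1 hA2 hu hM
          (fun s hs j => (hφ s hs.1 j).mono Icc_subset_Ici_self) hgG hφ0 t ⟨ht, le_rfl⟩ i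
    _ ≤ M + G * ⨆ j, u j := by gcongr; exact le_ciSup (Finite.bddAbove_range u) i

/-- (Deterministic Duhamel-plus-occupation-time estimate.) Let `S` be a
finite set and `A` a substochastic generator matrix on `S` (nonnegative off-diagonal
entries, nonpositive row sums). Let `u ≥ 0` solve `A u = −1_D`, let `g` be continuous on
`[0,∞)` and supported on `D`, and let `φ` solve `φ' = A φ + g` on `[0,∞)`. Then for every
`t ≥ 0`, `max_i |φ_t(i)| ≤ max_i |φ_0(i)| + (sup_{0≤s≤t} max_{i∈D} |g_s(i)|)·max_i u(i)`. -/
theorem duhamel_occupation_estimate {S : Type*} [Fintype S] [Nonempty S] [DecidableEq S]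
    (A : S → S → ℝ) (hA1 : ∀ i j, i ≠ j → 0 ≤ A i j) (hA2 : ∀ i, ∑ j, A i j ≤ 0)
    (D : Finset S) (u : S → ℝ) (hu0 : ∀ i, 0 ≤ u i)
    (hu : ∀ i, ∑ j, A i j * u j = -(if i ∈ D then 1 else 0))
    (g : ℝ → S → ℝ) (hgcont : ContinuousOn g (Set.Ici 0))
    (hgD : ∀ t, 0 ≤ t → ∀ i, i ∉ D → g t i = 0)
    (φ : ℝ → S → ℝ)
    (hφ : ∀ t, 0 ≤ t → ∀ i, HasDerivWithinAt (fun s => φ s i)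
      ((∑ j, A i j * φ t j) + g t i) (Set.Ici 0) t) :
    ∀ t, 0 ≤ t → ∀ i, |φ t i| ≤
      (⨆ j, |φ 0 j|)
        + (⨆ s : Set.Icc (0 : ℝ) t, ⨆ j : D, |g (s : ℝ) (j : S)|) * ⨆ j, u j :=
  duhamel_occupation_estimate_general A hA1 hA2 D u hu0 hu g hgcont hgD φ hφ
end
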